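/- Let φ be a (1,1)-tensor field and ψ a (0,2)-tensor field on a smooth manifold. Define Φ₂(φ,ψ)(X,Y,Z) := (L_{φ(X)}ψ − L_X(ψ∘₂φ))(Y,Z) − (L_{φ(Y)}ψ − L_Y(ψ∘₂φ))(X,Z) − (ψ∘₂φ)([X,Y],Z) + (ψ∘₁φ)([X,Y],Z). Then Φ₂(φ,ψ) is a (0,3)-tensor field, i.e., C^∞(M)-linear in each argument X, Y, Z. -/

import Mathlib

open scoped BigOperators

noncomputable section

/-- Points of the model space `ℝ^m`. -/
abbrev Pt (m : ℕ) := Fin m → ℝ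
/-- Vector fields (or 1-forms) on `ℝ^m`, given by their components. -/
abbrev VF (m : ℕ) := Pt m → Fin m → ℝ
/-- (0,2)-tensor fields (or (1,1)-tensor fields) on `ℝ^m`, given by components. -/
abbrev T02 (m : ℕ) := Pt m → Fin m → Fin m → ℝ
/-- (0,3)- or (1,2)-tensor fields on `ℝ^m`, given by components. -/
abbrev T3 (m : ℕ) := Pt m → Fin m → Fin m → Fin m → ℝ

variable {m : ℕ}

/-- `i`-th partial derivative of a scalar function. -/
def pd (i : Fin m) (f : Pt m → ℝ) (x : Pt m) : ℝ :=
  fderiv ℝ f x (Pi.single i 1)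

/-- Derivative of a function `f` along a vector field `X`. -/
def Xdot (X : VF m) (f : Pt m → ℝ) (x : Pt m) : ℝ :=
  ∑ k, X x k * pd k f x

/-- Lie bracket of vector fields, in components. -/
def lieB (X Y : VF m) : VF m := fun x i =>
  ∑ k, (X x k * pd k (fun y => Y y i) x - Y x k * pd k (fun y => X y i) x)

/-- Evaluation `ψ(X)` of a 1-form on a vector field. -/
def ev1 (ψ X : VF m) (x : Pt m) : ℝ := ∑ i, ψ x i * X x i

/-- Exterior derivative of a function, as a 1-form. -/
def dF (f : Pt m → ℝ) : VF m := fun x i => pd i f x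

/-- Exterior derivative of a 1-form, as a 2-form: `(dψ)_{ij} = ∂_i ψ_j - ∂_j ψ_i`. -/
def d2 (ψ : VF m) : T02 m := fun x i j =>
  pd i (fun y => ψ y j) x - pd j (fun y => ψ y i) x

/-- Evaluation of a (0,2)-tensor field on two vector fields. -/
def ev2 (T : T02 m) (X Y : VF m) (x : Pt m) : ℝ :=
  ∑ i, ∑ j, T x i j * X x i * Y x j

/-- Lie derivative of a 1-form `ψ` along `X`, evaluated on `Y`:
`(L_X ψ)(Y) = X·(ψ(Y)) - ψ([X,Y])`. -/
def lie1 (X ψ Y : VF m) (x : Pt m) : ℝ :=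
  Xdot X (ev1 ψ Y) x - ev1 ψ (lieB X Y) x

/-- Lie derivative of a (0,2)-tensor field `T` along `X`, evaluated on `Y, Z`:
`(L_X T)(Y,Z) = X·T(Y,Z) - T([X,Y],Z) - T(Y,[X,Z])`. -/
def lie2 (X : VF m) (T : T02 m) (Y Z : VF m) (x : Pt m) : ℝ :=
  Xdot X (ev2 T Y Z) x - ev2 T (lieB X Y) Z x - ev2 T Y (lieB X Z) x

/-- Application of a (1,1)-tensor field to a vector field: `(φX)^i = φ^i_j X^j`. -/
def appT (φ : T02 m) (X : VF m) : VF m := fun x i => ∑ j, φ x i j * X x j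

/-- `(ψ∘₁φ)(X,Y) = ψ(φX,Y)`, in components `(ψ∘₁φ)_{ij} = ψ_{aj} φ^a_i`. -/
def comp1 (ψ φ : T02 m) : T02 m := fun x i j => ∑ a, ψ x a j * φ x a i

/-- `(ψ∘₂φ)(X,Y) = ψ(X,φY)`, in components `(ψ∘₂φ)_{ij} = ψ_{ia} φ^a_j`. -/
def comp2 (ψ φ : T02 m) : T02 m := fun x i j => ∑ a, ψ x i a * φ x a j

/-- Composition `ψ∘φ` of a 1-form with a (1,1)-tensor field:  `(ψ∘φ)_i = ψ_a φ^a_i`. -/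
def compF (ψ : VF m) (φ : T02 m) : VF m := fun x i => ∑ a, ψ x a * φ x a i

/-- Exterior derivative of a 2-form `T`, as a 3-form:
`(dT)_{ijk} = ∂_i T_{jk} - ∂_j T_{ik} + ∂_k T_{ij}`. -/
def d3 (T : T02 m) : T3 m := fun x i j k =>
  pd i (fun y => T y j k) x - pd j (fun y => T y i k) x + pd k (fun y => T y i j) x

/-- Evaluation of a (0,3)-tensor field on three vector fields. -/
def ev3 (U : T3 m) (X Y Z : VF m) (x : Pt m) : ℝ :=
  ∑ i, ∑ j, ∑ k, U x i j k * X x i * Y x j * Z x k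

/-- Pointwise sum of vector fields. -/
def addV (X Y : VF m) : VF m := fun x i => X x i + Y x i

/-- Pointwise multiplication of a vector field by a function. -/
def smulV (f : Pt m → ℝ) (X : VF m) : VF m := fun x i => f x * X x i

/-- The second operator of Theorem 3.4:
`Φ₂(φ,ψ)(X,Y,Z) = (L_{φ(X)}ψ − L_X(ψ∘₂φ))(Y,Z) − (L_{φ(Y)}ψ − L_Y(ψ∘₂φ))(X,Z)
  − (ψ∘₂φ)([X,Y],Z) + (ψ∘₁φ)([X,Y],Z)`. -/
def Phi2 (φ ψ : T02 m) (X Y Z : VF m) (x : Pt m) : ℝ :=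
  (lie2 (appT φ X) ψ Y Z x - lie2 X (comp2 ψ φ) Y Z x)
  - (lie2 (appT φ Y) ψ X Z x - lie2 Y (comp2 ψ φ) X Z x)
  - ev2 (comp2 ψ φ) (lieB X Y) Z x + ev2 (comp1 ψ φ) (lieB X Y) Z x

/-! Each Lie derivative `L_W T` is tensorial in its two arguments, while
`L_{fW} T (A, B) = f L_W T (A, B) + (A f) T(W, B) + (B f) T(A, W)`. Replacing `X` by `fX` in `Φ₂`
therefore leaves, besides `f Φ₂`, only the terms `(Y f) (ψ(φX, Z) - ψ(X, φZ))` (the `Z f` terms of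
the two Lie derivatives cancel), and the bracket terms cancel them because
`[fX, Y] = f [X, Y] - (Y f) X`. In `Z` only tensorial slots occur, and `Φ₂` is antisymmetric in
`X, Y`, which handles the middle argument. -/

section

variable {x : Pt m}

lemma addV_apply (X Y : VF m) (x : Pt m) : addV X Y x = X x + Y x := rfl

lemma smulV_apply (f : Pt m → ℝ) (X : VF m) (x : Pt m) : smulV f X x = f x • X x := rfl

lemma DifferentiableAt.apply₂ {T : T02 m} (hT : DifferentiableAt ℝ T x) (i j : Fin m) :
    DifferentiableAt ℝ (fun y => T y i j) x :=
  differentiableAt_pi.1 (differentiableAt_pi.1 hT i) j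

lemma differentiableAt_appT {φ : T02 m} {X : VF m} (hφ : DifferentiableAt ℝ φ x)
    (hX : DifferentiableAt ℝ X x) : DifferentiableAt ℝ (appT φ X) x :=
  differentiableAt_pi.2 fun i => DifferentiableAt.fun_sum fun j _ =>
    (hφ.apply₂ i j).mul (differentiableAt_pi.1 hX j)

lemma differentiableAt_comp2 {ψ φ : T02 m} (hψ : DifferentiableAt ℝ ψ x)
    (hφ : DifferentiableAt ℝ φ x) : DifferentiableAt ℝ (comp2 ψ φ) x :=
  differentiableAt_pi.2 fun i => differentiableAt_pi.2 fun j =>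
    DifferentiableAt.fun_sum fun a _ => (hψ.apply₂ i a).mul (hφ.apply₂ a j)

lemma differentiableAt_ev2 {T : T02 m} {A B : VF m} (hT : DifferentiableAt ℝ T x)
    (hA : DifferentiableAt ℝ A x) (hB : DifferentiableAt ℝ B x) :
    DifferentiableAt ℝ (ev2 T A B) x :=
  DifferentiableAt.fun_sum fun i _ => DifferentiableAt.fun_sum fun j _ =>
    ((hT.apply₂ i j).mul (differentiableAt_pi.1 hA i)).mul (differentiableAt_pi.1 hB j)

lemma Xdot_eq_fderiv (X : VF m) (g : Pt m → ℝ) (x : Pt m) :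
    Xdot X g x = fderiv ℝ g x (X x) := by
  conv_rhs => rw [← Finset.univ_sum_single (X x)]
  simp only [Xdot, pd, map_sum]
  refine Finset.sum_congr rfl fun k _ => ?_
  rw [← smul_eq_mul, ← map_smul, ← Pi.single_smul, smul_eq_mul, mul_one]

lemma Xdot_addV (X X' : VF m) (g : Pt m → ℝ) (x : Pt m) :
    Xdot (addV X X') g x = Xdot X g x + Xdot X' g x := by
  rw [Xdot_eq_fderiv, addV_apply, map_add, Xdot_eq_fderiv, Xdot_eq_fderiv]

lemma Xdot_smulV (f : Pt m → ℝ) (X : VF m) (g : Pt m → ℝ) (x : Pt m) :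
    Xdot (smulV f X) g x = f x * Xdot X g x := by
  rw [Xdot_eq_fderiv, smulV_apply, map_smul, smul_eq_mul, Xdot_eq_fderiv]

lemma Xdot_add {g h : Pt m → ℝ} (X : VF m) (hg : DifferentiableAt ℝ g x)
    (hh : DifferentiableAt ℝ h x) : Xdot X (g + h) x = Xdot X g x + Xdot X h x := by
  simp only [Xdot_eq_fderiv, fderiv_add hg hh, add_apply]

lemma Xdot_mul {g h : Pt m → ℝ} (X : VF m) (hg : DifferentiableAt ℝ g x)
    (hh : DifferentiableAt ℝ h x) : Xdot X (g * h) x = g x * Xdot X h x + h x * Xdot X g x := by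
  simp only [Xdot_eq_fderiv, fderiv_mul hg hh, add_apply, smul_apply, smul_eq_mul]

lemma lieB_apply (X Y : VF m) (x : Pt m) (i : Fin m) :
    lieB X Y x i = Xdot X (fun y => Y y i) x - Xdot Y (fun y => X y i) x :=
  Finset.sum_sub_distrib ..

lemma lieB_swap (X Y : VF m) : lieB Y X = -lieB X Y := by
  ext x i
  rw [Pi.neg_apply, Pi.neg_apply, lieB_apply, lieB_apply, neg_sub]

lemma lieB_addV_left {X X' : VF m} (Y : VF m) (hX : DifferentiableAt ℝ X x)
    (hX' : DifferentiableAt ℝ X' x) : lieB (addV X X') Y x = lieB X Y x + lieB X' Y x := by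
  ext i
  have hsum := fderiv_fun_add (differentiableAt_pi.1 hX i) (differentiableAt_pi.1 hX' i)
  simp only [lieB_apply, Xdot_eq_fderiv, addV_apply, Pi.add_apply, hsum, map_add, add_apply]
  ring

lemma lieB_smulV_left {f : Pt m → ℝ} {X : VF m} (Y : VF m) (hf : DifferentiableAt ℝ f x)
    (hX : DifferentiableAt ℝ X x) :
    lieB (smulV f X) Y x = f x • lieB X Y x - Xdot Y f x • X x := by
  ext i
  have hprod := fderiv_fun_mul hf (differentiableAt_pi.1 hX i)
  simp only [lieB_apply, Xdot_eq_fderiv, smulV_apply, Pi.sub_apply, Pi.smul_apply, smul_eq_mul,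
    hprod, map_smul, add_apply, smul_apply]
  ring

lemma lieB_addV_right (X : VF m) {Y Y' : VF m} (hY : DifferentiableAt ℝ Y x)
    (hY' : DifferentiableAt ℝ Y' x) : lieB X (addV Y Y') x = lieB X Y x + lieB X Y' x := by
  rw [lieB_swap, Pi.neg_apply, lieB_addV_left X hY hY', lieB_swap, lieB_swap X Y']
  simp only [Pi.neg_apply]
  abel

lemma lieB_smulV_right {f : Pt m → ℝ} (X : VF m) {Y : VF m} (hf : DifferentiableAt ℝ f x)
    (hY : DifferentiableAt ℝ Y x) :
    lieB X (smulV f Y) x = f x • lieB X Y x + Xdot X f x • Y x := by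
  rw [lieB_swap, Pi.neg_apply, lieB_smulV_left X hf hY, lieB_swap]
  simp only [Pi.neg_apply]
  module

lemma ev2_eq_toLinearMap₂' (T : T02 m) (A B : VF m) (x : Pt m) :
    ev2 T A B x = Matrix.toLinearMap₂' ℝ (Matrix.of (T x)) (A x) (B x) := by
  rw [Matrix.toLinearMap₂'_apply']
  simp only [ev2, dotProduct, Matrix.mulVec, Matrix.of_apply, Finset.mul_sum]
  exact Finset.sum_congr rfl fun i _ => Finset.sum_congr rfl fun j _ => by ring

lemma ev2_addV_left (T : T02 m) (A A' B : VF m) :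
    ev2 T (addV A A') B = ev2 T A B + ev2 T A' B := by
  ext x
  simp only [Pi.add_apply, ev2_eq_toLinearMap₂', addV_apply, map_add, LinearMap.add_apply]

lemma ev2_smulV_left (T : T02 m) (f : Pt m → ℝ) (A B : VF m) :
    ev2 T (smulV f A) B = f * ev2 T A B := by
  ext x
  simp only [Pi.mul_apply, ev2_eq_toLinearMap₂', smulV_apply, map_smul, LinearMap.smul_apply,
    smul_eq_mul]

lemma ev2_addV_right (T : T02 m) (A B B' : VF m) :
    ev2 T A (addV B B') = ev2 T A B + ev2 T A B' := by
  ext x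
  simp only [Pi.add_apply, ev2_eq_toLinearMap₂', addV_apply, map_add]

lemma ev2_smulV_right (T : T02 m) (f : Pt m → ℝ) (A B : VF m) :
    ev2 T A (smulV f B) = f * ev2 T A B := by
  ext x
  simp only [Pi.mul_apply, ev2_eq_toLinearMap₂', smulV_apply, map_smul, smul_eq_mul]

lemma ev2_appT_left (ψ φ : T02 m) (X Z : VF m) :
    ev2 ψ (appT φ X) Z = ev2 (comp1 ψ φ) X Z := by
  ext x
  simp only [ev2, appT, comp1, Finset.mul_sum, Finset.sum_mul]
  rw [Finset.sum_comm]
  conv_rhs => rw [Finset.sum_comm]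
  refine Finset.sum_congr rfl fun j _ => ?_
  rw [Finset.sum_comm]
  exact Finset.sum_congr rfl fun i _ => Finset.sum_congr rfl fun a _ => by ring

lemma ev2_appT_right (ψ φ : T02 m) (X Y : VF m) :
    ev2 ψ X (appT φ Y) = ev2 (comp2 ψ φ) X Y := by
  ext x
  simp only [ev2, appT, comp2, Finset.mul_sum, Finset.sum_mul]
  refine Finset.sum_congr rfl fun i _ => ?_
  rw [Finset.sum_comm]
  exact Finset.sum_congr rfl fun j _ => Finset.sum_congr rfl fun a _ => by ring

lemma appT_addV (φ : T02 m) (X X' : VF m) :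
    appT φ (addV X X') = addV (appT φ X) (appT φ X') := by
  ext x i
  simp only [appT, addV, mul_add, Finset.sum_add_distrib]

lemma appT_smulV (φ : T02 m) (f : Pt m → ℝ) (X : VF m) :
    appT φ (smulV f X) = smulV f (appT φ X) := by
  ext x i
  simp only [appT, smulV, Finset.mul_sum]
  exact Finset.sum_congr rfl fun j _ => by ring

lemma lie2_addV_field {W W' : VF m} (T : T02 m) (A B : VF m) (hW : DifferentiableAt ℝ W x)
    (hW' : DifferentiableAt ℝ W' x) :
    lie2 (addV W W') T A B x = lie2 W T A B x + lie2 W' T A B x := by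
  simp only [lie2, Xdot_addV, ev2_eq_toLinearMap₂', lieB_addV_left _ hW hW', map_add,
    LinearMap.add_apply]
  ring

lemma lie2_smulV_field {f : Pt m → ℝ} {W : VF m} (T : T02 m) (A B : VF m)
    (hf : DifferentiableAt ℝ f x) (hW : DifferentiableAt ℝ W x) :
    lie2 (smulV f W) T A B x =
      f x * lie2 W T A B x + Xdot A f x * ev2 T W B x + Xdot B f x * ev2 T A W x := by
  simp only [lie2, Xdot_smulV, ev2_eq_toLinearMap₂', lieB_smulV_left _ hf hW, map_sub, map_smul,
    LinearMap.sub_apply, LinearMap.smul_apply, smul_eq_mul]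
  ring

lemma lie2_addV_left (W : VF m) {T : T02 m} {A A' B : VF m} (hT : DifferentiableAt ℝ T x)
    (hA : DifferentiableAt ℝ A x) (hA' : DifferentiableAt ℝ A' x) (hB : DifferentiableAt ℝ B x) :
    lie2 W T (addV A A') B x = lie2 W T A B x + lie2 W T A' B x := by
  simp only [lie2, ev2_addV_left, Xdot_add W (differentiableAt_ev2 hT hA hB)
    (differentiableAt_ev2 hT hA' hB), ev2_eq_toLinearMap₂', addV_apply,
    lieB_addV_right W hA hA', map_add, LinearMap.add_apply]
  ring

lemma lie2_smulV_left (W : VF m) {f : Pt m → ℝ} {T : T02 m} {A B : VF m}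
    (hf : DifferentiableAt ℝ f x) (hT : DifferentiableAt ℝ T x) (hA : DifferentiableAt ℝ A x)
    (hB : DifferentiableAt ℝ B x) :
    lie2 W T (smulV f A) B x = f x * lie2 W T A B x := by
  simp only [lie2, ev2_smulV_left, Xdot_mul W hf (differentiableAt_ev2 hT hA hB),
    ev2_eq_toLinearMap₂', smulV_apply, lieB_smulV_right W hf hA, map_add, map_smul,
    LinearMap.add_apply, LinearMap.smul_apply, smul_eq_mul]
  ring

lemma lie2_addV_right (W : VF m) {T : T02 m} {A B B' : VF m} (hT : DifferentiableAt ℝ T x)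
    (hA : DifferentiableAt ℝ A x) (hB : DifferentiableAt ℝ B x) (hB' : DifferentiableAt ℝ B' x) :
    lie2 W T A (addV B B') x = lie2 W T A B x + lie2 W T A B' x := by
  simp only [lie2, ev2_addV_right, Xdot_add W (differentiableAt_ev2 hT hA hB)
    (differentiableAt_ev2 hT hA hB'), ev2_eq_toLinearMap₂', addV_apply,
    lieB_addV_right W hB hB', map_add]
  ring

lemma lie2_smulV_right (W : VF m) {f : Pt m → ℝ} {T : T02 m} {A B : VF m}
    (hf : DifferentiableAt ℝ f x) (hT : DifferentiableAt ℝ T x) (hA : DifferentiableAt ℝ A x)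
    (hB : DifferentiableAt ℝ B x) :
    lie2 W T A (smulV f B) x = f x * lie2 W T A B x := by
  simp only [lie2, ev2_smulV_right, Xdot_mul W hf (differentiableAt_ev2 hT hA hB),
    ev2_eq_toLinearMap₂', smulV_apply, lieB_smulV_right W hf hB, map_add, map_smul, smul_eq_mul]
  ring

lemma Phi2_swap (φ ψ : T02 m) (X Y Z : VF m) (x : Pt m) :
    Phi2 φ ψ Y X Z x = -Phi2 φ ψ X Y Z x := by
  simp only [Phi2, lieB_swap X Y, Pi.neg_apply, ev2_eq_toLinearMap₂', map_neg,
    LinearMap.neg_apply]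
  ring

variable {φ ψ : T02 m}

lemma Phi2_addV_left {X X' : VF m} (Y : VF m) {Z : VF m} (hφ : DifferentiableAt ℝ φ x)
    (hψ : DifferentiableAt ℝ ψ x) (hX : DifferentiableAt ℝ X x) (hX' : DifferentiableAt ℝ X' x)
    (hZ : DifferentiableAt ℝ Z x) :
    Phi2 φ ψ (addV X X') Y Z x = Phi2 φ ψ X Y Z x + Phi2 φ ψ X' Y Z x := by
  simp only [Phi2, appT_addV,
    lie2_addV_field _ _ _ (differentiableAt_appT hφ hX) (differentiableAt_appT hφ hX'),
    lie2_addV_field _ _ _ hX hX', lie2_addV_left _ hψ hX hX' hZ,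
    lie2_addV_left _ (differentiableAt_comp2 hψ hφ) hX hX' hZ, ev2_eq_toLinearMap₂',
    lieB_addV_left _ hX hX', map_add, LinearMap.add_apply]
  ring

lemma Phi2_smulV_left {f : Pt m → ℝ} {X : VF m} (Y : VF m) {Z : VF m}
    (hf : DifferentiableAt ℝ f x) (hφ : DifferentiableAt ℝ φ x) (hψ : DifferentiableAt ℝ ψ x)
    (hX : DifferentiableAt ℝ X x) (hZ : DifferentiableAt ℝ Z x) :
    Phi2 φ ψ (smulV f X) Y Z x = f x * Phi2 φ ψ X Y Z x := by
  simp only [Phi2, appT_smulV, lie2_smulV_field _ _ _ hf (differentiableAt_appT hφ hX),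
    lie2_smulV_field _ _ _ hf hX, lie2_smulV_left _ hf hψ hX hZ,
    lie2_smulV_left _ hf (differentiableAt_comp2 hψ hφ) hX hZ, ev2_appT_left, ev2_appT_right]
  simp only [ev2_eq_toLinearMap₂', lieB_smulV_left _ hf hX, map_sub, map_smul,
    LinearMap.sub_apply, LinearMap.smul_apply, smul_eq_mul]
  ring

lemma Phi2_addV_right (X Y : VF m) {Z Z' : VF m} (hφ : DifferentiableAt ℝ φ x)
    (hψ : DifferentiableAt ℝ ψ x) (hX : DifferentiableAt ℝ X x) (hY : DifferentiableAt ℝ Y x)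
    (hZ : DifferentiableAt ℝ Z x) (hZ' : DifferentiableAt ℝ Z' x) :
    Phi2 φ ψ X Y (addV Z Z') x = Phi2 φ ψ X Y Z x + Phi2 φ ψ X Y Z' x := by
  have hφψ := differentiableAt_comp2 hψ hφ
  simp only [Phi2, lie2_addV_right _ hψ hY hZ hZ', lie2_addV_right _ hφψ hY hZ hZ',
    lie2_addV_right _ hψ hX hZ hZ', lie2_addV_right _ hφψ hX hZ hZ', ev2_eq_toLinearMap₂',
    addV_apply, map_add]
  ring

lemma Phi2_smulV_right (X Y : VF m) {f : Pt m → ℝ} {Z : VF m} (hf : DifferentiableAt ℝ f x)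
    (hφ : DifferentiableAt ℝ φ x) (hψ : DifferentiableAt ℝ ψ x) (hX : DifferentiableAt ℝ X x)
    (hY : DifferentiableAt ℝ Y x) (hZ : DifferentiableAt ℝ Z x) :
    Phi2 φ ψ X Y (smulV f Z) x = f x * Phi2 φ ψ X Y Z x := by
  have hφψ := differentiableAt_comp2 hψ hφ
  simp only [Phi2, lie2_smulV_right _ hf hψ hY hZ, lie2_smulV_right _ hf hφψ hY hZ,
    lie2_smulV_right _ hf hψ hX hZ, lie2_smulV_right _ hf hφψ hX hZ, ev2_eq_toLinearMap₂',
    smulV_apply, map_smul, smul_eq_mul]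
  ring

end

/-- Theorem 3.4, second operator: `Φ₂(φ,ψ)` is a (0,3)-tensor field, i.e. it is
`C^∞(M)`-linear in each of its arguments `X, Y, Z`. -/
theorem stmt13 (m : ℕ) (φ ψ : T02 m)
    (hφ : ContDiff ℝ (⊤ : ℕ∞) φ) (hψ : ContDiff ℝ (⊤ : ℕ∞) ψ) :
    ∀ (f : Pt m → ℝ), ContDiff ℝ (⊤ : ℕ∞) f →
    ∀ (X X' Y Z : VF m), ContDiff ℝ (⊤ : ℕ∞) X → ContDiff ℝ (⊤ : ℕ∞) X' →
      ContDiff ℝ (⊤ : ℕ∞) Y → ContDiff ℝ (⊤ : ℕ∞) Z →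
    ∀ x : Pt m,
      (Phi2 φ ψ (addV X X') Y Z x = Phi2 φ ψ X Y Z x + Phi2 φ ψ X' Y Z x) ∧
      (Phi2 φ ψ (smulV f X) Y Z x = f x * Phi2 φ ψ X Y Z x) ∧
      (Phi2 φ ψ X (addV Y X') Z x = Phi2 φ ψ X Y Z x + Phi2 φ ψ X X' Z x) ∧
      (Phi2 φ ψ X (smulV f Y) Z x = f x * Phi2 φ ψ X Y Z x) ∧
      (Phi2 φ ψ X Y (addV Z X') x = Phi2 φ ψ X Y Z x + Phi2 φ ψ X Y X' x) ∧
      (Phi2 φ ψ X Y (smulV f Z) x = f x * Phi2 φ ψ X Y Z x) := by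
  intro f hf X X' Y Z hX hX' hY hZ x
  have htop : ((⊤ : ℕ∞) : WithTop ℕ∞) ≠ 0 := by simp
  replace hφ := hφ.differentiable htop x
  replace hψ := hψ.differentiable htop x
  replace hf := hf.differentiable htop x
  replace hX := hX.differentiable htop x
  replace hX' := hX'.differentiable htop x
  replace hY := hY.differentiable htop x
  replace hZ := hZ.differentiable htop x
  refine ⟨Phi2_addV_left Y hφ hψ hX hX' hZ, Phi2_smulV_left Y hf hφ hψ hX hZ, ?_, ?_,
    Phi2_addV_right X Y hφ hψ hX hY hZ hX', Phi2_smulV_right X Y hf hφ hψ hX hY hZ⟩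
  · rw [Phi2_swap, Phi2_addV_left X hφ hψ hY hX' hZ, Phi2_swap, Phi2_swap φ ψ X X', neg_add,
      neg_neg, neg_neg]
  · rw [Phi2_swap, Phi2_smulV_left X hf hφ hψ hY hZ, Phi2_swap, mul_neg, neg_neg]
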